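/- The solution Y(T) of the simple gap equation is continuous on (0, τ₁) and satisfies Y(T) → 0 as T ↑ τ₁. -/

import Mathlib

/-!
Write `g(y, T)` for the gap integral. For fixed `T > 0` it is strictly decreasing in `y ≥ 0`,
because `tanh` is concave on `[0, ∞)`, so `tanh x / x` decreases; for fixed `y ≥ 0` it is
continuous in `T > 0` by dominated convergence (`|tanh| ≤ 1`). Now `Y` is read off the level set
`g(Y T, T) = 1 / U₁`: if `g(L, T₀) = 1 / U₁` and `u > L`, then `g(u, T₀) < 1 / U₁`, hence
`g(u, T) < 1 / U₁ = g(Y T, T)` for `T` near `T₀`, which forces `Y T < u`; symmetrically from below.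
At `T₀ ∈ (0, τ₁)` this gives continuity with `L = Y T₀`, and at `τ₁` the equation defining `τ₁`
says `g(0, τ₁) = 1 / U₁`, so `L = 0`.
-/

open Real Set Filter Topology

namespace Real

theorem hasDerivAt_tanh (x : ℝ) : HasDerivAt tanh (cosh x ^ 2)⁻¹ x := by
  have h := (hasDerivAt_sinh x).div (hasDerivAt_cosh x) (cosh_pos x).ne'
  rw [← sq, ← sq, cosh_sq_sub_sinh_sq, ← inv_eq_one_div] at h
  rwa [show tanh = fun x => sinh x / cosh x from funext tanh_eq_sinh_div_cosh]

@[fun_prop]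
theorem continuous_tanh : Continuous tanh :=
  continuous_iff_continuousAt.2 fun x => (hasDerivAt_tanh x).continuousAt

theorem strictConcaveOn_tanh : StrictConcaveOn ℝ (Ici 0) tanh := by
  refine StrictAntiOn.strictConcaveOn_of_deriv (convex_Ici 0) continuous_tanh.continuousOn ?_
  rw [interior_Ici]
  intro x hx y hy hxy
  have hcosh : cosh x < cosh y := by
    rw [cosh_lt_cosh, abs_of_pos hx, abs_of_pos hy]
    exact hxy
  simp only [(hasDerivAt_tanh _).deriv]
  gcongr

theorem strictAntiOn_tanh_div_self : StrictAntiOn (fun x => tanh x / x) (Ioi 0) := by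
  intro x hx y hy hxy
  simpa [tanh_zero] using strictConcaveOn_tanh.secant_strict_mono self_mem_Ici
    (mem_Ici.2 (le_of_lt hx)) (mem_Ici.2 (le_of_lt hy)) (ne_of_gt hx) (ne_of_gt hy) hxy

end Real

theorem strictAntiOn_one_div_mul_tanh_div {c : ℝ} (hc : 0 < c) :
    StrictAntiOn (fun s => 1 / s * tanh (s / c)) (Ioi 0) := by
  intro a ha b hb hab
  have key := strictAntiOn_tanh_div_self (div_pos ha hc) (div_pos hb hc)
    (div_lt_div_of_pos_right hab hc)
  have rescale : ∀ s : ℝ, 0 < s → 1 / s * tanh (s / c) = tanh (s / c) / (s / c) / c := by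
    intro s hs
    field_simp
  simp only [rescale a ha, rescale b hb]
  exact div_lt_div_of_pos_right key hc

theorem tendsto_of_eq_level_of_antitoneOn {α β : Type*} [LinearOrder β] [TopologicalSpace β]
    [OrderTopology β] {l : Filter α} {s : Set β} [s.OrdConnected] {g : β → α → ℝ} {G : β → ℝ}
    {Y : α → β} {c : ℝ} {L : β}
    (hg : ∀ y ∈ s, Tendsto (g y) l (𝓝 (G y))) (hG : StrictAntiOn G s) (hL : L ∈ s)
    (hGL : G L = c) (hanti : ∀ᶠ t in l, AntitoneOn (g · t) s)
    (hY : ∀ᶠ t in l, Y t ∈ s ∧ g (Y t) t = c) : Tendsto Y l (𝓝 L) := by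
  refine tendsto_order.2 ⟨fun a ha => ?_, fun b hb => ?_⟩
  · by_cases has : a ∈ s
    · filter_upwards [(tendsto_order.1 (hg a has)).1 c (hGL ▸ hG has hL ha), hanti, hY]
        with t hgt hant hYt
      by_contra! h
      linarith [hant hYt.1 has h, hYt.2]
    · filter_upwards [hY] with t hYt
      by_contra! h
      exact has (s.Icc_subset hYt.1 hL ⟨h, ha.le⟩)
  · by_cases hbs : b ∈ s
    · filter_upwards [(tendsto_order.1 (hg b hbs)).2 c (hGL ▸ hG hL hbs hb), hanti, hY]
        with t hgt hant hYt
      by_contra! h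
      linarith [hant hbs hYt.1 h, hYt.2]
    · filter_upwards [hY] with t hYt
      by_contra! h
      exact hbs (s.Icc_subset hL hYt.1 ⟨hb.le, h⟩)

noncomputable def gapIntegrand (y T ξ : ℝ) : ℝ :=
  1 / √(ξ ^ 2 + y) * tanh (√(ξ ^ 2 + y) / (2 * T))

noncomputable def gapIntegral (ε ω y T : ℝ) : ℝ := ∫ ξ in ε..ω, gapIntegrand y T ξ

section Gap

open scoped Interval

variable {ε ω y T ξ : ℝ}

theorem sqrt_sq_add_pos (hξ : ξ ≠ 0) (hy : 0 ≤ y) : 0 < √(ξ ^ 2 + y) := by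
  positivity

theorem continuousOn_gapIntegrand (hy : 0 ≤ y) : ContinuousOn (gapIntegrand y T) {0}ᶜ :=
  (continuousOn_const.div (by fun_prop) fun _ hξ => (sqrt_sq_add_pos hξ hy).ne').mul
    (by fun_prop)

theorem gapIntegrand_strictAntiOn (hξ : ξ ≠ 0) (hT : 0 < T) :
    StrictAntiOn (fun y => gapIntegrand y T ξ) (Ici 0) := by
  refine (strictAntiOn_one_div_mul_tanh_div (by positivity : (0:ℝ) < 2 * T)).comp_strictMonoOn
    ?_ fun y hy => sqrt_sq_add_pos hξ hy
  rintro y₁ (hy₁ : 0 ≤ y₁) y₂ - h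
  exact sqrt_lt_sqrt (by positivity) (by linarith)

theorem gapIntegral_strictAntiOn (hε : 0 < ε) (hεω : ε < ω) (hT : 0 < T) :
    StrictAntiOn (fun y => gapIntegral ε ω y T) (Ici 0) := by
  intro y₁ hy₁ y₂ hy₂ h
  have hIcc : Icc ε ω ⊆ {0}ᶜ := fun ξ hξ => (hε.trans_le hξ.1).ne'
  have hlt : ∀ ξ ∈ Icc ε ω, gapIntegrand y₂ T ξ < gapIntegrand y₁ T ξ := fun ξ hξ =>
    gapIntegrand_strictAntiOn (hIcc hξ) hT hy₁ hy₂ h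
  exact intervalIntegral.integral_lt_integral_of_continuousOn_of_le_of_exists_lt hεω
    ((continuousOn_gapIntegrand hy₂).mono hIcc) ((continuousOn_gapIntegrand hy₁).mono hIcc)
    (fun ξ hξ => (hlt ξ (Ioc_subset_Icc_self hξ)).le)
    ⟨ε, left_mem_Icc.2 hεω.le, hlt ε (left_mem_Icc.2 hεω.le)⟩

theorem continuousAt_gapIntegral (hε : 0 < ε) (hεω : ε ≤ ω) (hy : 0 ≤ y) (hT : T ≠ 0) :
    ContinuousAt (gapIntegral ε ω y) T := by
  have hIcc : uIcc ε ω ⊆ {0}ᶜ := fun ξ hξ => (hε.trans_le (uIcc_of_le hεω ▸ hξ).1).ne'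
  have hIoc : Ι ε ω ⊆ {0}ᶜ := uIoc_subset_uIcc.trans hIcc
  have hbound : ContinuousOn (fun ξ => 1 / √(ξ ^ 2 + y)) (uIcc ε ω) :=
    continuousOn_const.div (by fun_prop) fun _ hξ => (sqrt_sq_add_pos (hIcc hξ) hy).ne'
  refine intervalIntegral.continuousAt_of_dominated_interval
    (Eventually.of_forall fun _ =>
      ((continuousOn_gapIntegrand hy).mono hIoc).aestronglyMeasurable measurableSet_uIoc)
    (Eventually.of_forall fun _ => Eventually.of_forall fun ξ _ => ?_) hbound.intervalIntegrable
    (Eventually.of_forall fun ξ _ => ?_)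
  · rw [gapIntegrand, norm_mul, Real.norm_of_nonneg (by positivity)]
    exact mul_le_of_le_one_right (by positivity) (abs_tanh_lt_one _).le
  · unfold gapIntegrand
    fun_prop (disch := positivity)

theorem gapIntegral_zero (hε : 0 ≤ ε) (hεω : ε ≤ ω) :
    gapIntegral ε ω 0 T = ∫ ξ in ε..ω, 1 / ξ * tanh (ξ / (2 * T)) := by
  refine intervalIntegral.integral_congr fun ξ hξ => ?_
  rw [gapIntegrand, add_zero, sqrt_sq (hε.trans (uIcc_of_le hεω ▸ hξ).1)]

theorem tendsto_of_gapIntegral_eq {l : Filter ℝ} {Y : ℝ → ℝ} {c L T₀ : ℝ} (hε : 0 < ε)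
    (hεω : ε < ω) (hT₀ : 0 < T₀) (hl : l ≤ 𝓝 T₀) (hL : 0 ≤ L) (hLc : gapIntegral ε ω L T₀ = c)
    (hY : ∀ᶠ T in l, 0 ≤ Y T ∧ gapIntegral ε ω (Y T) T = c) : Tendsto Y l (𝓝 L) :=
  tendsto_of_eq_level_of_antitoneOn (s := Ici 0)
    (fun _ hy => (continuousAt_gapIntegral hε hεω.le hy hT₀.ne').tendsto.mono_left hl)
    (gapIntegral_strictAntiOn hε hεω hT₀) hL hLc
    ((eventually_gt_nhds hT₀).filter_mono hl |>.mono fun _ hT =>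
      (gapIntegral_strictAntiOn hε hεω hT).antitoneOn)
    hY

end Gap

theorem stmt7_general (U₁ ε ω τ₁ : ℝ) (hε : 0 < ε) (hεω : ε < ω)
    (hτ₁ : 0 < τ₁)
    (hτ : 1 = U₁ * ∫ ξ in ε..ω, (1 / ξ) * Real.tanh (ξ / (2 * τ₁)))
    (Y : ℝ → ℝ)
    (hY : ∀ T ∈ Set.Ioo 0 τ₁, 0 ≤ Y T ∧
      1 = U₁ * ∫ ξ in ε..ω,
        (1 / Real.sqrt (ξ ^ 2 + Y T)) * Real.tanh (Real.sqrt (ξ ^ 2 + Y T) / (2 * T))) :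
    ContinuousOn Y (Set.Ioo 0 τ₁) ∧
    Filter.Tendsto Y (nhdsWithin τ₁ (Set.Iio τ₁)) (nhds 0) := by
  have hlevel : ∀ T ∈ Ioo 0 τ₁, 0 ≤ Y T ∧ gapIntegral ε ω (Y T) T = 1 / U₁ := fun T hT =>
    ⟨(hY T hT).1, eq_one_div_of_mul_eq_one_right (hY T hT).2.symm⟩
  have hcrit : gapIntegral ε ω 0 τ₁ = 1 / U₁ := by
    rw [gapIntegral_zero hε.le hεω.le]
    exact eq_one_div_of_mul_eq_one_right hτ.symm
  refine ⟨fun T hT => ?_, ?_⟩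
  · refine (tendsto_of_gapIntegral_eq hε hεω hT.1 le_rfl (hlevel T hT).1 (hlevel T hT).2 ?_
      ).mono_left nhdsWithin_le_nhds
    filter_upwards [isOpen_Ioo.mem_nhds hT] using hlevel
  · refine tendsto_of_gapIntegral_eq hε hεω hτ₁ nhdsWithin_le_nhds le_rfl hcrit ?_
    filter_upwards [Ioo_mem_nhdsLT hτ₁] using hlevel

/-- The solution Y(T) of the simple gap equation is continuous on (0, τ₁) and
Y(T) → 0 as T ↑ τ₁. -/
theorem stmt7 (U₁ ε ω τ₁ : ℝ) (hU : 0 < U₁) (hε : 0 < ε) (hεω : ε < ω)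
    (hτ₁ : 0 < τ₁)
    (hτ : 1 = U₁ * ∫ ξ in ε..ω, (1 / ξ) * Real.tanh (ξ / (2 * τ₁)))
    (Y : ℝ → ℝ)
    (hY : ∀ T ∈ Set.Ioo 0 τ₁, 0 ≤ Y T ∧
      1 = U₁ * ∫ ξ in ε..ω,
        (1 / Real.sqrt (ξ ^ 2 + Y T)) * Real.tanh (Real.sqrt (ξ ^ 2 + Y T) / (2 * T))) :
    ContinuousOn Y (Set.Ioo 0 τ₁) ∧
    Filter.Tendsto Y (nhdsWithin τ₁ (Set.Iio τ₁)) (nhds 0) :=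
  stmt7_general U₁ ε ω τ₁ hε hεω hτ₁ hτ Y hY
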